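/- For the random walk P_{1/2,q} on the homogeneous tree T_q, the generalized spherical function φ(x,y) = q^{-∇(x,y)} ( (q+1)/(q-1) + d(x,y) ) is harmonic in x for each fixed vertex y. -/

import Mathlib

open Classical

/-- n-step transition probabilities of a Markov kernel. -/
noncomputable def nstep {X : Type*} (p : X → X → ℝ) : ℕ → X → X → ℝ
  | 0, x, y => if x = y then 1 else 0
  | (n+1), x, y => ∑' z, nstep p n x z * p z y

/-- Green function. -/
noncomputable def green {X : Type*} (p : X → X → ℝ) (x y : X) : ℝ :=
  ∑' n, nstep p n x y

/-- Probability that the chain started at `a` ever visits `b`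
(sum of weights of paths hitting `b` for the first time at the last step). -/
noncomputable def hitProb {X : Type*} (p : X → X → ℝ) (a b : X) : ℝ :=
  ∑' n : ℕ, ∑' g : {g : Fin (n+1) → X //
      g 0 = a ∧ g (Fin.last n) = b ∧ ∀ j, j ≠ Fin.last n → g j ≠ b},
    ∏ i : Fin n, p (g.1 i.castSucc) (g.1 i.succ)

/-- Probability that the chain started at `a` visits `b` before ever visiting `c`. -/
noncomputable def hitBefore {X : Type*} (p : X → X → ℝ) (a b c : X) : ℝ :=
  ∑' n : ℕ, ∑' g : {g : Fin (n+1) → X //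
      g 0 = a ∧ g (Fin.last n) = b ∧ (∀ j, j ≠ Fin.last n → g j ≠ b) ∧ ∀ j, g j ≠ c},
    ∏ i : Fin n, p (g.1 i.castSucc) (g.1 i.succ)

/-- The homogeneous tree `T_q` with a fixed reference end, encoded by the
predecessor ("one step towards the end") map. -/
structure TreeWithEnd (q : ℕ) where
  V : Type
  countable : Countable V
  pred : V → V
  fiber_card : ∀ x : V, Nat.card {y : V // pred y = x} = q
  acyclic : ∀ (x : V) (n : ℕ), 0 < n → pred^[n] x ≠ x
  connected : ∀ x y : V, ∃ m n : ℕ, pred^[m] x = pred^[n] y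

/-- Number of upward steps Δ(x,y) from `x` to the confluent `x ⋏ y`. -/
noncomputable def TreeWithEnd.up {q : ℕ} (T : TreeWithEnd q) (x y : T.V) : ℕ :=
  sInf {m : ℕ | ∃ n : ℕ, T.pred^[m] x = T.pred^[n] y}

/-- Number of downward steps ∇(x,y) = Δ(y,x). -/
noncomputable def TreeWithEnd.down {q : ℕ} (T : TreeWithEnd q) (x y : T.V) : ℕ :=
  T.up y x

/-- Busemann function (horocycle index) with respect to the base point `o`. -/
noncomputable def TreeWithEnd.hor {q : ℕ} (T : TreeWithEnd q) (o x : T.V) : ℤ :=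
  (T.down o x : ℤ) - (T.up o x : ℤ)

/-- The graph structure of the tree. -/
def TreeWithEnd.graph {q : ℕ} (T : TreeWithEnd q) : SimpleGraph T.V :=
  SimpleGraph.fromRel (fun x y => T.pred x = y)

/-- Transition probabilities of the random walk `P_{α,q}` on `T_q`. -/
noncomputable def treeWalk {q : ℕ} (T : TreeWithEnd q) (α : ℝ) : T.V → T.V → ℝ :=
  fun x y => if T.pred y = x then α / q else if y = T.pred x then 1 - α else 0

/-!
The value of `φ` at `x` depends only on the pair `(Δ(x,y), ∇(x,y))`, and these coordinates of
the neighbours of `x` are explicit: the predecessor of `x` has `(Δ - 1, ∇)` if `Δ > 0` and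
`(0, ∇ + 1)` otherwise; every child has `(Δ + 1, ∇)`, except, when `x` lies strictly above `y`
on the ray `[y, ω)`, the one child on that ray, which has `(0, ∇ - 1)`. The mean-value property
thus reduces to three recurrences for the profile `(u, v) ↦ q^{-v} (C + u + v)`. Off the ray the
profile is affine in `u`; on the ray the recurrence holds for every `C`; only the equation at
`x = y` forces `C = (q + 1)/(q - 1)`.
-/

namespace TreeWithEnd

variable {q : ℕ} (T : TreeWithEnd q)

lemma iterate_pred_injective (z : T.V) : Function.Injective fun n => T.pred^[n] z := by
  intro m n h
  wlog hmn : m ≤ n generalizing m n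
  · exact (this h.symm (by omega)).symm
  by_contra hne
  apply T.acyclic (T.pred^[m] z) (n - m) (by omega)
  dsimp only at h
  rw [← Function.iterate_add_apply, Nat.sub_add_cancel hmn, ← h]

lemma exists_iterate_up_eq (x y : T.V) : ∃ n, T.pred^[T.up x y] x = T.pred^[n] y := by
  obtain ⟨m, n, h⟩ := T.connected x y
  exact Nat.sInf_mem (s := {m | ∃ n, T.pred^[m] x = T.pred^[n] y}) ⟨m, n, h⟩

lemma up_le_of_iterate_eq {x y : T.V} {m n : ℕ} (h : T.pred^[m] x = T.pred^[n] y) :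
    T.up x y ≤ m :=
  Nat.sInf_le ⟨n, h⟩

lemma add_eq_add_of_iterate_eq {x y : T.V} {m n m' n' : ℕ} (h : T.pred^[m] x = T.pred^[n] y)
    (h' : T.pred^[m'] x = T.pred^[n'] y) : m + n' = m' + n := by
  have : T.pred^[n' + m] x = T.pred^[n + m'] x := by
    rw [Function.iterate_add_apply, Function.iterate_add_apply, h, h',
      ← Function.iterate_add_apply, ← Function.iterate_add_apply, add_comm n' n]
  have := T.iterate_pred_injective x this
  omega

lemma iterate_up_eq_iterate_up (x y : T.V) : T.pred^[T.up x y] x = T.pred^[T.up y x] y := by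
  obtain ⟨n, hn⟩ := T.exists_iterate_up_eq x y
  obtain ⟨m, hm⟩ := T.exists_iterate_up_eq y x
  have := T.add_eq_add_of_iterate_eq hn hm.symm
  have := T.up_le_of_iterate_eq hm.symm
  have := T.up_le_of_iterate_eq hn.symm
  rwa [show T.up y x = n by omega]

lemma iterate_eq_iterate_iff (x y : T.V) (m n : ℕ) :
    T.pred^[m] x = T.pred^[n] y ↔ ∃ k, m = T.up x y + k ∧ n = T.up y x + k := by
  constructor
  · intro h
    have := T.add_eq_add_of_iterate_eq h (T.iterate_up_eq_iterate_up x y)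
    have := T.up_le_of_iterate_eq h
    exact ⟨m - T.up x y, by omega, by omega⟩
  · rintro ⟨k, rfl, rfl⟩
    rw [add_comm, Function.iterate_add_apply, add_comm (T.up y x), Function.iterate_add_apply,
      T.iterate_up_eq_iterate_up]

lemma up_eq_of_minimal {x y : T.V} {a b : ℕ} (hab : T.pred^[a] x = T.pred^[b] y)
    (hmin : ∀ m n, T.pred^[m] x = T.pred^[n] y → a ≤ m ∧ b ≤ n) :
    T.up x y = a ∧ T.up y x = b := by
  have := hmin _ _ (T.iterate_up_eq_iterate_up x y)
  have := T.up_le_of_iterate_eq hab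
  have := T.up_le_of_iterate_eq hab.symm
  omega

lemma up_pred_of_pos {x y : T.V} (h : 0 < T.up x y) :
    T.up (T.pred x) y = T.up x y - 1 ∧ T.up y (T.pred x) = T.up y x := by
  apply T.up_eq_of_minimal
  · rw [← Function.iterate_succ_apply, Nat.succ_eq_add_one, Nat.sub_add_cancel h]
    exact T.iterate_up_eq_iterate_up x y
  · intro m n hmn
    rw [← Function.iterate_succ_apply] at hmn
    obtain ⟨k, _, _⟩ := (T.iterate_eq_iterate_iff x y _ _).1 hmn
    omega

lemma up_pred_of_eq_zero {x y : T.V} (h : T.up x y = 0) :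
    T.up (T.pred x) y = 0 ∧ T.up y (T.pred x) = T.up y x + 1 := by
  apply T.up_eq_of_minimal
  · have := T.iterate_up_eq_iterate_up x y
    rw [h, Function.iterate_zero_apply] at this
    rw [Function.iterate_zero_apply, Function.iterate_succ_apply', ← this]
  · intro m n hmn
    rw [← Function.iterate_succ_apply] at hmn
    obtain ⟨k, _, _⟩ := (T.iterate_eq_iterate_iff x y _ _).1 hmn
    omega

-- the geodesic ray `[y, ω)`
def ray (y : T.V) : Set T.V := Set.range fun n => T.pred^[n] y

lemma up_iterate_self (y : T.V) (n : ℕ) :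
    T.up (T.pred^[n] y) y = 0 ∧ T.up y (T.pred^[n] y) = n := by
  refine T.up_eq_of_minimal rfl fun m k hmk => ?_
  rw [← Function.iterate_add_apply] at hmk
  have := T.iterate_pred_injective y hmk
  omega

lemma up_eq_zero_of_child_eq_iterate {x y z : T.V} (hz : T.pred z = x) {n : ℕ}
    (h : T.pred^[n] y = z) : T.up x y = 0 ∧ T.up y x = n + 1 := by
  have : T.pred^[0] x = T.pred^[n + 1] y := by
    rw [Function.iterate_zero_apply, Function.iterate_succ_apply', h, hz]
  obtain ⟨k, _, _⟩ := (T.iterate_eq_iterate_iff x y _ _).1 this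
  omega

lemma up_child_of_notMem_ray {x y z : T.V} (hz : T.pred z = x) (hzy : z ∉ T.ray y) :
    T.up z y = T.up x y + 1 ∧ T.up y z = T.up y x := by
  apply T.up_eq_of_minimal
  · rw [Function.iterate_succ_apply, hz]
    exact T.iterate_up_eq_iterate_up x y
  · rintro (_ | m) n hmn
    · exact absurd ⟨n, hmn.symm⟩ hzy
    · rw [Function.iterate_succ_apply, hz] at hmn
      obtain ⟨k, _, _⟩ := (T.iterate_eq_iterate_iff x y _ _).1 hmn
      omega

lemma finite_setOf_pred_eq (hq : q ≠ 0) (x : T.V) : {z | T.pred z = x}.Finite :=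
  Set.finite_coe_iff.1 (Nat.finite_of_card_ne_zero ((T.fiber_card x).symm ▸ hq))

noncomputable def children (hq : q ≠ 0) (x : T.V) : Finset T.V :=
  (T.finite_setOf_pred_eq hq x).toFinset

variable {T}

@[simp]
lemma mem_children {hq : q ≠ 0} {x z : T.V} : z ∈ T.children hq x ↔ T.pred z = x :=
  Set.Finite.mem_toFinset _

lemma card_children (hq : q ≠ 0) (x : T.V) : (T.children hq x).card = q := by
  rw [children, ← Set.ncard_eq_toFinset_card _ (T.finite_setOf_pred_eq hq x),
    ← Nat.card_coe_set_eq]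
  exact T.fiber_card x

lemma tsum_treeWalk_mul (hq : q ≠ 0) (α : ℝ) (f : T.V → ℝ) (x : T.V) :
    ∑' z, treeWalk T α x z * f z =
      (1 - α) * f (T.pred x) + α / q * ∑ z ∈ T.children hq x, f z := by
  have hpred : T.pred (T.pred x) ≠ x := T.acyclic x 2 two_pos
  have hnot : T.pred x ∉ T.children hq x := by simpa using hpred
  rw [tsum_eq_sum (s := insert (T.pred x) (T.children hq x)), Finset.sum_insert hnot,
    Finset.mul_sum]
  · congr 1
    · simp [treeWalk, hpred]
    · refine Finset.sum_congr rfl fun z hz => ?_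
      simp [treeWalk, mem_children.1 hz]
  · intro z hz
    simp only [Finset.mem_insert, mem_children, not_or] at hz
    simp [treeWalk, hz.1, hz.2]

section SumChildren

variable (hq : q ≠ 0) (g : ℕ → ℕ → ℝ) {x : T.V} (y : T.V)

lemma sum_children_of_forall_notMem_ray (h : ∀ z, T.pred z = x → z ∉ T.ray y) :
    ∑ z ∈ T.children hq x, g (T.up z y) (T.up y z) = q * g (T.up x y + 1) (T.up y x) := by
  rw [Finset.sum_congr rfl fun z hz => by
      have hz := mem_children.1 hz
      obtain ⟨hup, hdown⟩ := T.up_child_of_notMem_ray hz (h z hz)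
      rw [hup, hdown],
    Finset.sum_const, card_children, nsmul_eq_mul]

lemma sum_children_of_up_eq_zero (h0 : T.up x y = 0) (hv : 0 < T.up y x) :
    ∑ z ∈ T.children hq x, g (T.up z y) (T.up y z) =
      g 0 (T.up y x - 1) + (q - 1) * g 1 (T.up y x) := by
  set z₀ := T.pred^[T.up y x - 1] y
  have hz₀ : z₀ ∈ T.children hq x := by
    have := T.iterate_up_eq_iterate_up x y
    rw [h0, Function.iterate_zero_apply] at this
    rw [mem_children, ← Function.iterate_succ_apply' T.pred, Nat.succ_eq_add_one,
      Nat.sub_add_cancel hv]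
    exact this.symm
  have hoff : ∀ z ∈ (T.children hq x).erase z₀, T.pred z = x ∧ z ∉ T.ray y := by
    intro z hz
    obtain ⟨hne, hz⟩ := Finset.mem_erase.1 hz
    refine ⟨mem_children.1 hz, ?_⟩
    rintro ⟨n, rfl⟩
    have := (T.up_eq_zero_of_child_eq_iterate (mem_children.1 hz) rfl).2
    exact hne (by simp only [z₀, this, Nat.add_sub_cancel])
  rw [← Finset.add_sum_erase _ _ hz₀, (T.up_iterate_self y _).1, (T.up_iterate_self y _).2,
    Finset.sum_congr rfl fun z hz => by
      obtain ⟨hup, hdown⟩ := T.up_child_of_notMem_ray (hoff z hz).1 (hoff z hz).2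
      rw [hup, hdown, h0],
    Finset.sum_const, Finset.card_erase_of_mem hz₀, card_children, nsmul_eq_mul,
    Nat.cast_pred (by omega)]

end SumChildren

theorem treeWalk_harmonic_of_recurrence (hq : q ≠ 0) (α : ℝ) (y : T.V) (g : ℕ → ℕ → ℝ)
    (h_off : ∀ u v, (1 - α) * g u v + α * g (u + 2) v = g (u + 1) v)
    (h_root : (1 - α) * g 0 1 + α * g 1 0 = g 0 0)
    (h_ray : ∀ v,
      (1 - α) * g 0 (v + 2) + α / q * (g 0 v + (q - 1) * g 1 (v + 1)) = g 0 (v + 1))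
    (x : T.V) :
    ∑' z, treeWalk T α x z * g (T.up z y) (T.down z y) = g (T.up x y) (T.down x y) := by
  have hq' : (q : ℝ) ≠ 0 := Nat.cast_ne_zero.2 hq
  have off_ray (h : 0 < T.up x y ∨ T.up y x = 0) : ∀ z, T.pred z = x → z ∉ T.ray y := by
    rintro z hz ⟨n, rfl⟩
    have := T.up_eq_zero_of_child_eq_iterate hz rfl
    omega
  rw [tsum_treeWalk_mul hq]
  simp only [down]
  rcases Nat.eq_zero_or_pos (T.up x y) with hu | hu
  · rw [(T.up_pred_of_eq_zero hu).1, (T.up_pred_of_eq_zero hu).2]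
    rcases Nat.eq_zero_or_pos (T.up y x) with hv | hv
    · rw [sum_children_of_forall_notMem_ray hq g y (off_ray (.inr hv)), hu, hv, ← h_root]
      field_simp
    · have := h_ray (T.up y x - 1)
      rw [Nat.sub_add_cancel hv, show T.up y x - 1 + 2 = T.up y x + 1 by omega] at this
      rw [sum_children_of_up_eq_zero hq g y hu hv, hu, ← this]
  · rw [(T.up_pred_of_pos hu).1, (T.up_pred_of_pos hu).2,
      sum_children_of_forall_notMem_ray hq g y (off_ray (.inl hu))]
    have := h_off (T.up x y - 1) (T.up y x)
    rw [Nat.sub_add_cancel hu, show T.up x y - 1 + 2 = T.up x y + 1 by omega] at this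
    rw [← this]
    field_simp

end TreeWithEnd

noncomputable def sphericalProfile (q u v : ℕ) : ℝ :=
  ((q : ℝ) ^ v)⁻¹ * (((q : ℝ) + 1) / ((q : ℝ) - 1) + ((u + v : ℕ) : ℝ))

/-- For the driftless random walk `P_{1/2,q}` on `T_q`, the generalized
spherical function φ(x) = q^{-∇(x,y)} ((q+1)/(q-1) + d(x,y)) is harmonic
in x for each fixed y. -/
theorem spherical_harmonic_driftless (q : ℕ) (hq : 2 ≤ q)
    (T : TreeWithEnd q) (y : T.V) (φ : T.V → ℝ)
    (hφ : ∀ x, φ x = ((q : ℝ) ^ (T.down x y))⁻¹ *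
      (((q : ℝ) + 1) / ((q : ℝ) - 1) + ((T.up x y + T.down x y : ℕ) : ℝ))) :
    ∀ x, (∑' z, treeWalk T (1 / 2) x z * φ z) = φ x := by
  have hq0 : (q : ℝ) ≠ 0 := by positivity
  have hq1 : (q : ℝ) - 1 ≠ 0 := sub_ne_zero.2 (by exact_mod_cast (by omega : q ≠ 1))
  obtain rfl : φ = fun x => sphericalProfile q (T.up x y) (T.down x y) := funext hφ
  refine T.treeWalk_harmonic_of_recurrence (by omega) (1 / 2) y _ (fun u v => ?_) ?_ (fun v => ?_)
  all_goals
    simp only [sphericalProfile]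
    push_cast
    field_simp
    ring
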